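/- Define badSet : List Bool → Set ℕ by badSet [] = {0} and, for a list l of length m and a Boolean b, badSet (l ++ [b]) = if b = true then {m + 1} else badSet l ∪ {m + 1}. Then for every list l : List Bool and every i : ℕ, i ∈ badSet l if and only if i ≤ l.length and every entry of l.drop i equals false. -/
import Mathlib


/-- Any function `badSet : List Bool → Set ℕ` satisfying the recursion
`badSet [] = {0}` and
`badSet (l ++ [b]) = if b = true then {l.length + 1} else badSet l ∪ {l.length + 1}`
is characterized by: `i ∈ badSet l` iff `i ≤ l.length` and every entry of `l.drop i`
is `false` (no edge at depth `≥ i` along the path erases the marking). -/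
theorem badSet_mem_iff (badSet : List Bool → Set ℕ)
    (hnil : badSet [] = {0})
    (hsnoc : ∀ (l : List Bool) (b : Bool),
      badSet (l ++ [b]) =
        if b = true then {l.length + 1} else badSet l ∪ {l.length + 1}) :
    ∀ (l : List Bool) (i : ℕ),
      i ∈ badSet l ↔ i ≤ l.length ∧ ∀ x ∈ l.drop i, x = false := by
  intro l
  induction l using List.reverseRecOn with
  | nil =>
    intro i
    simp [hnil, Set.mem_singleton_iff, Nat.le_zero]
  | append_singleton l b ih =>
    intro i
    rw [hsnoc]
    rcases b with _ | _
    · rw [if_neg (Bool.false_ne_true)]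
      simp only [Set.mem_union, Set.mem_singleton_iff, ih]
      constructor
      · rintro (⟨hle, hall⟩ | rfl)
        · refine ⟨hle.trans (by simp), ?_⟩
          intro x hx
          rw [List.drop_append_of_le_length hle] at hx
          rcases List.mem_append.1 hx with h | h
          · exact hall x h
          · simpa using h
        · simp
      · rintro ⟨hle, hall⟩
        simp only [List.length_append, List.length_singleton] at hle
        rcases Nat.lt_or_ge i (l.length + 1) with h | h
        · have hle' : i ≤ l.length := Nat.lt_succ_iff.mp h
          left
          refine ⟨hle', fun x hx => hall x ?_⟩
          rw [List.drop_append_of_le_length hle']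
          exact List.mem_append.2 (Or.inl hx)
        · right; omega
    · simp only [if_pos rfl, Set.mem_singleton_iff]
      constructor
      · rintro rfl
        simp
      · rintro ⟨hle, hall⟩
        simp only [List.length_append, List.length_singleton] at hle
        by_contra hne
        have hlt : i < l.length + 1 := lt_of_le_of_ne hle hne
        have : (true : Bool) = false := by
          apply hall
          have : i ≤ l.length := Nat.lt_succ_iff.mp hlt
          rw [List.drop_append_of_le_length this]
          exact List.mem_append.2 (Or.inr (by simp))
        simp at this
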